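/- arXiv:0811.2989 — 5 statements merged into one kernel-verified Lean document; each statement's English description precedes it below -/
import Mathlib

section
/- If A_n → A in the strong operator topology and μ_n ⇒ μ weakly, then the pushforward measures A_n μ_n converge weakly to A μ. -/
open MeasureTheory Filter Topology

/-- Weak convergence of a sequence of (probability) measures, tested against bounded
continuous functions. -/
def WeakTendsto {E : Type*} [TopologicalSpace E] [MeasurableSpace E]
    (μ : ℕ → Measure E) (ν : Measure E) : Prop :=
  ∀ f : BoundedContinuousFunction E ℝ,
    Filter.Tendsto (fun n => ∫ x, f x ∂(μ n)) Filter.atTop (nhds (∫ x, f x ∂ν))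

/-!
By the uniform boundedness principle the `Aₙ` are `K`-Lipschitz for a common `K ≥ 1`. A
`K`-Lipschitz map enlarges the Lévy–Prokhorov distance by at most the factor `K`, and on a
separable space this distance metrizes weak convergence of probability measures. Hence
`d(Aₙμₙ, A₀ν) ≤ K d(μₙ, ν) + d(Aₙν, A₀ν)`, and the last term tends to zero by dominated convergence.
-/

open Metric
open scoped ENNReal NNReal

section Lipschitz

variable {X Y : Type*} [PseudoEMetricSpace X] [PseudoEMetricSpace Y]

lemma LipschitzWith.of_tendsto {T : ℕ → X → Y} {T₀ : X → Y} {K : ℝ≥0}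
    (hT : ∀ n, LipschitzWith K (T n)) (h : ∀ x, Tendsto (fun n => T n x) atTop (𝓝 (T₀ x))) :
    LipschitzWith K T₀ := fun x y =>
  le_of_tendsto' ((h x).edist (h y)) fun n => hT n x y

lemma LipschitzWith.thickening_preimage_subset {T : X → Y} {K : ℝ≥0} (hT : LipschitzWith K T)
    (hK : K ≠ 0) (B : Set Y) (r : ℝ) :
    thickening r (T ⁻¹' B) ⊆ T ⁻¹' thickening (K * r) B := by
  intro x hx
  obtain ⟨y, hyB, hxy⟩ := (mem_thickening_iff_exists_edist_lt _ _).mp hx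
  refine (mem_thickening_iff_exists_edist_lt _ _).mpr ⟨T y, hyB, ?_⟩
  calc edist (T x) (T y) ≤ K * edist x y := hT x y
    _ < K * ENNReal.ofReal r :=
      ENNReal.mul_lt_mul_right (by simpa using hK) ENNReal.coe_ne_top hxy
    _ = ENNReal.ofReal (K * r) := by
      rw [ENNReal.ofReal_mul K.coe_nonneg, ENNReal.ofReal_coe_nnreal]

variable [MeasurableSpace X] [MeasurableSpace Y] [OpensMeasurableSpace Y]

lemma levyProkhorovEDist_map_le_of_lipschitzWith (κ ξ : Measure X) {T : X → Y}
    (hTm : Measurable T) {K : ℝ≥0} (hK : 1 ≤ K) (hT : LipschitzWith K T) :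
    levyProkhorovEDist (κ.map T) (ξ.map T) ≤ K * levyProkhorovEDist κ ξ := by
  have hK₀ : (K : ℝ≥0∞) ≠ 0 := by simpa using (zero_lt_one.trans_le hK).ne'
  refine levyProkhorovEDist_le_of_forall _ _ _ fun ε B hε hε_top hB => ?_
  -- Compare `κ, ξ` at level `c = ε / K ≤ ε`: `T` maps `c`-thickenings into `ε`-thickenings.
  set c := ε / K
  have hc : levyProkhorovEDist κ ξ < c :=
    (ENNReal.lt_div_iff_mul_lt (.inl hK₀) (.inl ENNReal.coe_ne_top)).mpr (by rwa [mul_comm])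
  have hcε : c ≤ ε := (ENNReal.div_le_div_left (by exact_mod_cast hK) ε).trans_eq (div_one ε)
  have hKc : (K : ℝ) * c.toReal = ε.toReal := by
    rw [← ENNReal.coe_toReal, ← ENNReal.toReal_mul, ENNReal.mul_div_cancel hK₀ ENNReal.coe_ne_top]
  have hsub : thickening c.toReal (T ⁻¹' B) ⊆ T ⁻¹' thickening ε.toReal B := by
    simpa only [hKc] using hT.thickening_preimage_subset (by simpa using hK₀) B c.toReal
  have hthick : MeasurableSet (thickening ε.toReal B) := isOpen_thickening.measurableSet
  rw [Measure.map_apply hTm hB, Measure.map_apply hTm hB, Measure.map_apply hTm hthick,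
    Measure.map_apply hTm hthick]
  exact ⟨(left_measure_le_of_levyProkhorovEDist_lt hc (hTm hB)).trans
      (add_le_add (measure_mono hsub) hcε),
    (right_measure_le_of_levyProkhorovEDist_lt hc (hTm hB)).trans
      (add_le_add (measure_mono hsub) hcε)⟩

end Lipschitz

section WeakTendsto

variable {X Y : Type*} [MeasurableSpace X] [MeasurableSpace Y]

lemma weakTendsto_map_of_tendsto [TopologicalSpace Y] [OpensMeasurableSpace Y] (ν : Measure X)
    [IsFiniteMeasure ν] {T : ℕ → X → Y} {T₀ : X → Y} (hTm : ∀ n, AEMeasurable (T n) ν)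
    (hT₀m : AEMeasurable T₀ ν) (hT : ∀ᵐ x ∂ν, Tendsto (fun n => T n x) atTop (𝓝 (T₀ x))) :
    WeakTendsto (fun n => ν.map (T n)) (ν.map T₀) := by
  intro f
  simp only [integral_map (hTm _) f.continuous.aestronglyMeasurable,
    integral_map hT₀m f.continuous.aestronglyMeasurable]
  refine tendsto_integral_of_dominated_convergence (fun _ => ‖f‖)
    (fun n => (f.continuous.measurable.comp_aemeasurable (hTm n)).aestronglyMeasurable)
    (integrable_const _) (fun n => ae_of_all _ fun x => f.norm_coe_le_norm _) ?_
  filter_upwards [hT] with x hx using (f.continuous.tendsto _).comp hx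

lemma ProbabilityMeasure.weakTendsto_iff_tendsto [TopologicalSpace X] [OpensMeasurableSpace X]
    {P : ℕ → ProbabilityMeasure X} {Q : ProbabilityMeasure X} :
    WeakTendsto (fun n => (P n : Measure X)) Q ↔ Tendsto P atTop (𝓝 Q) :=
  ProbabilityMeasure.tendsto_iff_forall_integral_tendsto.symm

variable [PseudoMetricSpace X] [OpensMeasurableSpace X] {μ : ℕ → Measure X} {ν : Measure X}
  [∀ n, IsProbabilityMeasure (μ n)] [IsProbabilityMeasure ν]

lemma weakTendsto_of_tendsto_levyProkhorovEDist
    (h : Tendsto (fun n => levyProkhorovEDist (μ n) ν) atTop (𝓝 0)) : WeakTendsto μ ν :=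
  (ProbabilityMeasure.weakTendsto_iff_tendsto (P := fun n => ⟨μ n, inferInstance⟩)
    (Q := ⟨ν, inferInstance⟩)).mpr <|
    (LevyProkhorov.continuous_toMeasure_probabilityMeasure.tendsto _).comp
      (tendsto_iff_edist_tendsto_0.mpr h)

lemma WeakTendsto.tendsto_levyProkhorovEDist [TopologicalSpace.SeparableSpace X]
    (h : WeakTendsto μ ν) : Tendsto (fun n => levyProkhorovEDist (μ n) ν) atTop (𝓝 0) :=
  tendsto_iff_edist_tendsto_0.mp <|
    (LevyProkhorov.continuous_ofMeasure_probabilityMeasure.tendsto _).comp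
      ((ProbabilityMeasure.weakTendsto_iff_tendsto (P := fun n => ⟨μ n, inferInstance⟩)
        (Q := ⟨ν, inferInstance⟩)).mp h)

variable [TopologicalSpace.SeparableSpace X] [PseudoMetricSpace Y]
  [TopologicalSpace.SeparableSpace Y] [BorelSpace Y]

theorem WeakTendsto.map_of_lipschitzWith {T : ℕ → X → Y} {T₀ : X → Y} {K : ℝ≥0}
    (hT : ∀ n, LipschitzWith K (T n)) (hT₀ : ∀ x, Tendsto (fun n => T n x) atTop (𝓝 (T₀ x)))
    (h : WeakTendsto μ ν) :
    WeakTendsto (fun n => (μ n).map (T n)) (ν.map T₀) := by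
  have hTm n : Measurable (T n) := (hT n).continuous.measurable
  have hT₀m : Measurable T₀ := (LipschitzWith.of_tendsto hT hT₀).continuous.measurable
  have (n : ℕ) : IsProbabilityMeasure ((μ n).map (T n)) :=
    Measure.isProbabilityMeasure_map (hTm n).aemeasurable
  have (n : ℕ) : IsProbabilityMeasure (ν.map (T n)) :=
    Measure.isProbabilityMeasure_map (hTm n).aemeasurable
  have : IsProbabilityMeasure (ν.map T₀) := Measure.isProbabilityMeasure_map hT₀m.aemeasurable
  have hν : WeakTendsto (fun n => ν.map (T n)) (ν.map T₀) :=
    weakTendsto_map_of_tendsto ν (fun n => (hTm n).aemeasurable) hT₀m.aemeasurable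
      (ae_of_all _ hT₀)
  obtain ⟨L, hL, hTL⟩ : ∃ L : ℝ≥0, 1 ≤ L ∧ ∀ n, LipschitzWith L (T n) :=
    ⟨max 1 K, le_max_left _ _, fun n => (hT n).weaken (le_max_right _ _)⟩
  have hbound : Tendsto (fun n => L * levyProkhorovEDist (μ n) ν
      + levyProkhorovEDist (ν.map (T n)) (ν.map T₀)) atTop (𝓝 0) := by
    simpa using (ENNReal.Tendsto.const_mul h.tendsto_levyProkhorovEDist
      (.inr ENNReal.coe_ne_top)).add hν.tendsto_levyProkhorovEDist
  refine weakTendsto_of_tendsto_levyProkhorovEDist <|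
    tendsto_of_tendsto_of_tendsto_of_le_of_le tendsto_const_nhds hbound (fun _ => zero_le)
      fun n => ?_
  calc levyProkhorovEDist ((μ n).map (T n)) (ν.map T₀)
      ≤ levyProkhorovEDist ((μ n).map (T n)) (ν.map (T n))
        + levyProkhorovEDist (ν.map (T n)) (ν.map T₀) := levyProkhorovEDist_triangle _ _ _
    _ ≤ L * levyProkhorovEDist (μ n) ν + levyProkhorovEDist (ν.map (T n)) (ν.map T₀) := by
      gcongr
      exact levyProkhorovEDist_map_le_of_lipschitzWith _ _ (hTm n) hL (hTL n)

end WeakTendsto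

lemma ContinuousLinearMap.exists_forall_lipschitzWith_of_tendsto {𝕜 E F : Type*}
    [NontriviallyNormedField 𝕜] [NormedAddCommGroup E] [NormedSpace 𝕜 E] [CompleteSpace E]
    [NormedAddCommGroup F] [NormedSpace 𝕜 F] {A : ℕ → E →L[𝕜] F} {A₀ : E →L[𝕜] F}
    (h : ∀ x, Tendsto (fun n => A n x) atTop (𝓝 (A₀ x))) :
    ∃ K : ℝ≥0, ∀ n, LipschitzWith K (A n) := by
  obtain ⟨C, hC⟩ := banach_steinhaus fun x =>
    ((h x).norm.bddAbove_range).imp fun c hc n => hc ⟨n, rfl⟩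
  exact ⟨C.toNNReal, fun n => (A n).lipschitz.weaken (by simpa using Real.toNNReal_mono (hC n))⟩

/-- If `Aₙ → A` strongly and `μₙ ⇒ μ` weakly, then `Aₙ μₙ ⇒ A μ` weakly. -/
theorem map_weakTendsto_of_strong_tendsto
    {E : Type*} [NormedAddCommGroup E] [NormedSpace ℝ E] [CompleteSpace E]
    [TopologicalSpace.SeparableSpace E] [MeasurableSpace E] [BorelSpace E]
    (A : ℕ → E →L[ℝ] E) (A₀ : E →L[ℝ] E)
    (μ : ℕ → Measure E) (ν : Measure E)
    (hμ : ∀ n, IsProbabilityMeasure (μ n)) (hν : IsProbabilityMeasure ν)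
    (hA : ∀ x : E, Filter.Tendsto (fun n => A n x) Filter.atTop (nhds (A₀ x)))
    (hw : WeakTendsto μ ν) :
    WeakTendsto (fun n => (μ n).map (A n)) (ν.map A₀) := by
  obtain ⟨K, hK⟩ := ContinuousLinearMap.exists_forall_lipschitzWith_of_tendsto hA
  exact hw.map_of_lipschitzWith hK hA
end

section
/- If μ = A_n μ ∗ ν_{A_n} for Borel probability measures on a real separable Banach space and the operators A_n converge to 0 in the strong operator topology, then ν_{A_n} ⇒ μ weakly. -/
/-!
Testing against a bounded `L`-Lipschitz `f` suffices for weak convergence. The factorization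
gives `∫ f dμ = ∫ (∫ f (Aₙ x + y) dνₙ(y)) dμ(x)`, so `∫ f dνₙ - ∫ f dμ` is the `μ`-integral of
a function bounded by `2‖f‖` and by `L ‖Aₙ x‖ → 0`; dominated convergence concludes.
-/

open MeasureTheory Filter Topology

open scoped NNReal BoundedContinuousFunction

theorem WeakTendsto.of_forall_lipschitz {Ω : Type*} [PseudoEMetricSpace Ω] [MeasurableSpace Ω]
    [OpensMeasurableSpace Ω] {ν : ℕ → Measure Ω} [∀ n, IsProbabilityMeasure (ν n)]
    {μ : Measure Ω} [IsProbabilityMeasure μ]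
    (h : ∀ (f : Ω →ᵇ ℝ) (L : ℝ≥0), LipschitzWith L f →
      Tendsto (fun n => ∫ x, f x ∂ν n) atTop (𝓝 (∫ x, f x ∂μ))) :
    WeakTendsto ν μ := by
  let νs : ℕ → ProbabilityMeasure Ω := fun n => ⟨ν n, inferInstance⟩
  have hweak : Tendsto νs atTop (𝓝 ⟨μ, inferInstance⟩) :=
    tendsto_iff_forall_lipschitz_integral_tendsto.mpr
      fun f ⟨C, hC⟩ ⟨L, hL⟩ => h (.mkOfBound ⟨f, hL.continuous⟩ C hC) L hL
  exact ProbabilityMeasure.tendsto_iff_forall_integral_tendsto.mp hweak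

section Translation

variable {E : Type*} [SeminormedAddCommGroup E] [MeasurableSpace E] [OpensMeasurableSpace E]

theorem BoundedContinuousFunction.stronglyMeasurable_integral_comp_add [MeasurableAdd₂ E]
    (ν : Measure E) [SFinite ν] (f : E →ᵇ ℝ) :
    StronglyMeasurable fun x => ∫ y, f (x + y) ∂ν :=
  (f.continuous.measurable.comp measurable_add).stronglyMeasurable.integral_prod_right'

theorem BoundedContinuousFunction.integral_conv_map [MeasurableAdd₂ E]
    (μ ν : Measure E) [IsFiniteMeasure μ] [IsFiniteMeasure ν]
    {T : E → E} (hT : Measurable T) (f : E →ᵇ ℝ) :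
    ∫ z, f z ∂(μ.map T ∗ ν) = ∫ x, ∫ y, f (T x + y) ∂ν ∂μ := by
  rw [integral_conv (f.integrable _),
    integral_map hT.aemeasurable (f.stronglyMeasurable_integral_comp_add ν).aestronglyMeasurable]

theorem LipschitzWith.norm_integral_sub_integral_comp_add_le (ν : Measure E)
    [IsProbabilityMeasure ν] {f : E →ᵇ ℝ} {L : ℝ≥0} (hf : LipschitzWith L f) (x : E) :
    ‖∫ y, f y ∂ν - ∫ y, f (x + y) ∂ν‖ ≤ L * ‖x‖ := by
  have hg : Integrable (fun y => f (x + y)) ν :=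
    (f.compContinuous ⟨(x + ·), continuous_const_add x⟩).integrable ν
  rw [← integral_sub (f.integrable ν) hg]
  refine (norm_integral_le_of_norm_le_const (C := L * ‖x‖) (ae_of_all _ fun y => ?_)).trans_eq
    (by simp)
  simpa [← dist_eq_norm, dist_comm] using hf.dist_le_mul (x + y) y

theorem tendsto_integral_of_eq_conv_map_of_lipschitz [MeasurableAdd₂ E]
    {μ : Measure E} [IsProbabilityMeasure μ]
    {ν : ℕ → Measure E} [∀ n, IsProbabilityMeasure (ν n)]
    {T : ℕ → E → E} (hT : ∀ n, Measurable (T n)) (hfac : ∀ n, μ = μ.map (T n) ∗ ν n)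
    (hT₀ : ∀ x, Tendsto (fun n => T n x) atTop (𝓝 0))
    {f : E →ᵇ ℝ} {L : ℝ≥0} (hf : LipschitzWith L f) :
    Tendsto (fun n => ∫ x, f x ∂ν n) atTop (𝓝 (∫ x, f x ∂μ)) := by
  set I : ℕ → E → ℝ := fun n x => ∫ y, f (T n x + y) ∂ν n
  have hI_meas (n : ℕ) : AEStronglyMeasurable (I n) μ :=
    ((f.stronglyMeasurable_integral_comp_add (ν n)).comp_measurable (hT n)).aestronglyMeasurable
  have hI_bound (n : ℕ) (x : E) : ‖I n x‖ ≤ ‖f‖ :=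
    (norm_integral_le_of_norm_le_const (ae_of_all _ fun _ => f.norm_coe_le_norm _)).trans_eq
      (by simp)
  set D : ℕ → E → ℝ := fun n x => ∫ y, f y ∂ν n - I n x
  have hD_bound (n : ℕ) (x : E) : ‖D n x‖ ≤ 2 * ‖f‖ :=
    calc ‖D n x‖ ≤ ‖f‖ + ‖f‖ :=
          (norm_sub_le _ _).trans (add_le_add (f.norm_integral_le_norm (ν n)) (hI_bound n x))
      _ = 2 * ‖f‖ := by ring
  have hD_lim (x : E) : Tendsto (fun n => D n x) atTop (𝓝 0) := by
    refine squeeze_zero_norm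
      (fun n => hf.norm_integral_sub_integral_comp_add_le (ν n) (T n x)) ?_
    simpa using ((hT₀ x).norm.const_mul (L : ℝ))
  have hD_integral (n : ℕ) : ∫ x, D n x ∂μ = ∫ x, f x ∂ν n - ∫ x, f x ∂μ := by
    have hI_int : Integrable (I n) μ := .of_bound (hI_meas n) ‖f‖ (ae_of_all _ (hI_bound n))
    rw [integral_sub (integrable_const _) hI_int, integral_const, probReal_univ, one_smul,
      ← f.integral_conv_map μ (ν n) (hT n), ← hfac n]
  have h := tendsto_integral_of_dominated_convergence (F := D) _
    (fun n => aestronglyMeasurable_const.sub (hI_meas n)) (integrable_const (2 * ‖f‖))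
    (fun n => ae_of_all _ (hD_bound n)) (ae_of_all _ hD_lim)
  simp only [hD_integral, integral_zero] at h
  exact tendsto_sub_nhds_zero_iff.mp h

end Translation

theorem cofactor_weakTendsto_self_of_strong_tendsto_zero_general
    {E : Type*} [NormedAddCommGroup E] [NormedSpace ℝ E]
    [TopologicalSpace.SeparableSpace E] [MeasurableSpace E] [BorelSpace E]
    (μ : Measure E) [IsProbabilityMeasure μ]
    (A : ℕ → E →L[ℝ] E) (ν : ℕ → Measure E)
    (hν : ∀ n, IsProbabilityMeasure (ν n))
    (hfac : ∀ n, μ = (μ.map (A n)).conv (ν n))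
    (hA : ∀ x : E, Filter.Tendsto (fun n => A n x) Filter.atTop (nhds (0 : E))) :
    WeakTendsto ν μ := by
  have : SecondCountableTopology E := UniformSpace.secondCountable_of_separable E
  refine WeakTendsto.of_forall_lipschitz fun f L hf => ?_
  exact tendsto_integral_of_eq_conv_map_of_lipschitz (fun n => (A n).measurable) hfac hA hf

/-- If `μ = Aₙ μ ∗ ν_{Aₙ}` and `Aₙ → 0` strongly, then `ν_{Aₙ} ⇒ μ`. -/
theorem cofactor_weakTendsto_self_of_strong_tendsto_zero
    {E : Type*} [NormedAddCommGroup E] [NormedSpace ℝ E] [CompleteSpace E]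
    [TopologicalSpace.SeparableSpace E] [MeasurableSpace E] [BorelSpace E]
    (μ : Measure E) [IsProbabilityMeasure μ]
    (A : ℕ → E →L[ℝ] E) (ν : ℕ → Measure E)
    (hν : ∀ n, IsProbabilityMeasure (ν n))
    (hfac : ∀ n, μ = (μ.map (A n)).conv (ν n))
    (hA : ∀ x : E, Filter.Tendsto (fun n => A n x) Filter.atTop (nhds (0 : E))) :
    WeakTendsto ν μ :=
  cofactor_weakTendsto_self_of_strong_tendsto_zero_general μ A ν hν hfac hA
end

section
/- Let (A_t)_{t≥0} be bounded linear operators on E and (ρ_t)_{t≥0} Borel probability measures on E. The family of operators 𝒜_t^{(ρ_t)} on C_b(E) satisfies the semigroup law 𝒜_s^{(ρ_s)} ∘ 𝒜_t^{(ρ_t)} = 𝒜_{t+s}^{(ρ_{t+s})} for all s, t ≥ 0 if and only if A_t A_s = A_{t+s} and ρ_{t+s} = ρ_t ∗ A_t ρ_s for all s, t ≥ 0 (the measure-valued cocycle equation). -/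
open MeasureTheory Filter Topology
open scoped NNReal ENNReal

section MehlerAux
variable {E : Type*} [NormedAddCommGroup E] [NormedSpace ℝ E]
    [TopologicalSpace.SeparableSpace E] [MeasurableSpace E] [BorelSpace E]

set_option linter.unusedSectionVars false

/-- Two finite Borel measures agreeing on integrals of all real-valued bounded continuous
functions are equal. -/
lemma mehler_aux_ext {μ ν : Measure E} [IsFiniteMeasure μ] [IsFiniteMeasure ν]
    (h : ∀ f : BoundedContinuousFunction E ℝ, ∫ x, f x ∂μ = ∫ x, f x ∂ν) : μ = ν := by
  apply ext_of_forall_lintegral_eq_of_IsFiniteMeasure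
  intro f
  have key := h (BoundedContinuousFunction.comp (fun r : ℝ≥0 => (r : ℝ))
    ((show Isometry ((↑) : ℝ≥0 → ℝ) from fun _ _ => rfl).lipschitz) f)
  have h2 : (∫⁻ x, (f x : ℝ≥0∞) ∂μ).toReal = (∫⁻ x, (f x : ℝ≥0∞) ∂ν).toReal := by
    rw [BoundedContinuousFunction.toReal_lintegral_coe_eq_integral,
      BoundedContinuousFunction.toReal_lintegral_coe_eq_integral]
    simpa using key
  exact (ENNReal.toReal_eq_toReal_iff' (f.lintegral_lt_top_of_nnreal μ).ne
    (f.lintegral_lt_top_of_nnreal ν).ne).mp h2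

/-- If the translates of a probability measure by `a` and by `b` integrate all bounded
continuous functions equally, then `a = b`. -/
lemma mehler_aux_shift {μ : Measure E} [IsProbabilityMeasure μ] {a b : E}
    (h : ∀ f : BoundedContinuousFunction E ℝ, ∫ w, f (a + w) ∂μ = ∫ w, f (b + w) ∂μ) :
    a = b := by
  by_contra hab
  set c : E := a - b with hc
  have hc0 : c ≠ 0 := sub_ne_zero.mpr hab
  have hmap : μ.map (fun w => c + w) = μ := by
    have h1 : μ.map (fun w => a + w) = μ.map (fun w => b + w) := by
      apply mehler_aux_ext
      intro f
      rw [integral_map (by fun_prop) f.continuous.aestronglyMeasurable,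
        integral_map (by fun_prop) f.continuous.aestronglyMeasurable]
      exact h f
    calc μ.map (fun w => c + w)
        = (μ.map (fun w => a + w)).map (fun w => -b + w) := by
          rw [Measure.map_map (by fun_prop) (by fun_prop)]
          congr 1; ext w; simp [hc]; abel
      _ = (μ.map (fun w => b + w)).map (fun w => -b + w) := by rw [h1]
      _ = μ := by
          rw [Measure.map_map (by fun_prop) (by fun_prop)]
          simp
  have hball : ∀ (x : E) (R : ℝ), μ (Metric.closedBall x R) = μ (Metric.closedBall (x - c) R) := by
    intro x R
    conv_lhs => rw [← hmap]
    rw [Measure.map_apply (by fun_prop) measurableSet_closedBall]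
    congr 1
    ext w
    simp only [Set.mem_preimage, Metric.mem_closedBall, dist_eq_norm]
    have hrw : c + w - x = w - (x - c) := by abel
    rw [hrw]
  obtain ⟨R, hR⟩ : ∃ R : ℕ, (1/2 : ℝ≥0∞) < μ (Metric.closedBall 0 R) := by
    have hmono : Monotone (fun n : ℕ => Metric.closedBall (0 : E) n) := fun m n hmn =>
      Metric.closedBall_subset_closedBall (by exact_mod_cast hmn)
    have hun : (⋃ n : ℕ, Metric.closedBall (0 : E) n) = Set.univ := by
      ext x; simp only [Set.mem_iUnion, Set.mem_univ, iff_true]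
      obtain ⟨n, hn⟩ := exists_nat_gt (‖x‖)
      exact ⟨n, by simpa [Metric.mem_closedBall, dist_eq_norm] using hn.le⟩
    have htend := tendsto_measure_iUnion_atTop (μ := μ) hmono
    rw [hun, measure_univ] at htend
    exact (htend.eventually (eventually_gt_nhds (by norm_num : (1/2 : ℝ≥0∞) < 1))).exists
  have hiter : ∀ n : ℕ, μ (Metric.closedBall (-(n : ℝ) • c) R) = μ (Metric.closedBall 0 R) := by
    intro n
    induction n with
    | zero => simp
    | succ n ih =>
      have hrw : (-((n+1 : ℕ) : ℝ)) • c = (-(n : ℝ)) • c - c := by push_cast; module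
      rw [hrw, ← hball, ih]
  obtain ⟨n, hn⟩ := exists_nat_gt ((2 * R + 1) / ‖c‖)
  have hcpos : (0 : ℝ) < ‖c‖ := norm_pos_iff.mpr hc0
  have hdist : (R : ℝ) + R < dist (0 : E) (-(n : ℝ) • c) := by
    rw [dist_eq_norm, zero_sub, norm_neg, norm_smul]
    have h2 : (2 * R + 1 : ℝ) < n * ‖c‖ := (div_lt_iff₀ hcpos).mp hn
    have habs : ‖(-(n:ℝ))‖ = (n : ℝ) := by rw [norm_neg, Real.norm_natCast]
    rw [habs]
    linarith
  have hdisj : Disjoint (Metric.closedBall (0 : E) R) (Metric.closedBall (-(n : ℝ) • c) R) :=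
    Metric.closedBall_disjoint_closedBall hdist
  have hle : μ (Metric.closedBall (0 : E) R) + μ (Metric.closedBall (-(n : ℝ) • c) R) ≤ 1 := by
    rw [← measure_union hdisj measurableSet_closedBall]
    exact prob_le_one
  rw [hiter] at hle
  have hcontra : (1 : ℝ≥0∞) < 1 :=
    calc (1 : ℝ≥0∞) = 1/2 + 1/2 := by rw [one_div, ENNReal.inv_two_add_inv_two]
      _ < μ (Metric.closedBall 0 R) + μ (Metric.closedBall 0 R) := ENNReal.add_lt_add hR hR
      _ ≤ 1 := hle
  exact absurd hcontra (lt_irrefl 1)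

lemma mehler_aux_conv_prob (μ ν : Measure E) [IsProbabilityMeasure μ] [IsProbabilityMeasure ν] :
    IsProbabilityMeasure (μ.conv ν) := by
  haveI : SecondCountableTopology E := UniformSpace.secondCountable_of_separable E
  rw [Measure.conv]
  exact Measure.isProbabilityMeasure_map (by fun_prop)

/-- The double integral of a shifted bounded continuous function against `ν` then `μ`
equals the integral against the convolution `μ ∗ T_*ν`. -/
lemma mehler_aux_conv_integral (μ ν : Measure E) [IsProbabilityMeasure μ] [IsProbabilityMeasure ν]
    (T : E →L[ℝ] E) (f : BoundedContinuousFunction E ℝ) (a : E) :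
    ∫ y, ∫ z, f (a + T y + z) ∂μ ∂ν = ∫ w, f (a + w) ∂(μ.conv (ν.map T)) := by
  haveI : SecondCountableTopology E := UniformSpace.secondCountable_of_separable E
  haveI : IsProbabilityMeasure (ν.map T) :=
    Measure.isProbabilityMeasure_map T.continuous.measurable.aemeasurable
  have hswap :
      ∫ y, ∫ z, f (a + T y + z) ∂μ ∂ν = ∫ z, ∫ y, f (a + T y + z) ∂ν ∂μ := by
    apply integral_integral_swap
    exact (f.compContinuous ⟨fun p : E × E => a + T p.1 + p.2, by fun_prop⟩).integrable _
  have hint : Integrable (fun p : E × E => f (a + (p.1 + p.2))) (μ.prod (ν.map T)) :=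
    (f.compContinuous ⟨fun p : E × E => a + (p.1 + p.2), by fun_prop⟩).integrable _
  rw [hswap, Measure.conv,
    integral_map (by fun_prop) (Continuous.aestronglyMeasurable
      (by fun_prop : Continuous fun w : E => f (a + w))),
    integral_prod _ hint]
  congr 1
  ext z
  rw [integral_map T.continuous.aemeasurable (Continuous.aestronglyMeasurable
    (by fun_prop : Continuous fun w : E => f (a + (z + w))))]
  congr 1
  ext y
  congr 1
  abel

end MehlerAux

/-- The operators `𝒜_t^{(ρ_t)}` on `C_b(E)` form a one-parameter semigroup
(`𝒜_s^{(ρ_s)} ∘ 𝒜_t^{(ρ_t)} = 𝒜_{t+s}^{(ρ_{t+s})}`) iff the operators `A_t` form a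
semigroup and the measures satisfy the cocycle equation `ρ_{t+s} = ρ_t ∗ A_t ρ_s`. -/
theorem mehlerOp_semigroup_iff_cocycle
    {E : Type*} [NormedAddCommGroup E] [NormedSpace ℝ E] [CompleteSpace E]
    [TopologicalSpace.SeparableSpace E] [MeasurableSpace E] [BorelSpace E]
    (A : ℝ → E →L[ℝ] E) (ρ : ℝ → Measure E)
    (hρ : ∀ t, IsProbabilityMeasure (ρ t)) :
    (∀ s t : ℝ, 0 ≤ s → 0 ≤ t → ∀ (f : BoundedContinuousFunction E ℝ) (x : E),
        ∫ y, (∫ z, f (A t (A s x + y) + z) ∂(ρ t)) ∂(ρ s) =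
          ∫ z, f (A (t + s) x + z) ∂(ρ (t + s))) ↔
    (∀ s t : ℝ, 0 ≤ s → 0 ≤ t →
        (A t).comp (A s) = A (t + s) ∧
        ρ (t + s) = (ρ t).conv ((ρ s).map (A t))) := by
  haveI := fun t => hρ t
  -- rewrite the LHS double integral as an integral against a convolution
  have hL : ∀ (s t : ℝ) (f : BoundedContinuousFunction E ℝ) (x : E),
      ∫ y, (∫ z, f (A t (A s x + y) + z) ∂(ρ t)) ∂(ρ s) =
        ∫ w, f (A t (A s x) + w) ∂((ρ t).conv ((ρ s).map (A t))) := by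
    intro s t f x
    rw [← mehler_aux_conv_integral (ρ t) (ρ s) (A t) f (A t (A s x))]
    simp_rw [map_add]
  constructor
  · intro H s t hs ht
    haveI : IsProbabilityMeasure ((ρ s).map (A t)) :=
      Measure.isProbabilityMeasure_map (A t).continuous.measurable.aemeasurable
    haveI := mehler_aux_conv_prob (ρ t) ((ρ s).map (A t))
    have hmeas : ρ (t + s) = (ρ t).conv ((ρ s).map (A t)) := by
      apply mehler_aux_ext
      intro f
      have hx := H s t hs ht f 0
      rw [hL s t f 0] at hx
      simpa using hx.symm
    refine ⟨?_, hmeas⟩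
    apply ContinuousLinearMap.ext
    intro x
    show A t (A s x) = A (t + s) x
    apply mehler_aux_shift (μ := ρ (t + s))
    intro f
    have hx := H s t hs ht f x
    rw [hL s t f x, ← hmeas] at hx
    exact hx
  · intro H s t hs ht f x
    obtain ⟨hA, hmeas⟩ := H s t hs ht
    rw [hL s t f x, ← hmeas]
    have : A (t + s) x = A t (A s x) := by rw [← hA]; rfl
    rw [this]
end

section
/- Under the cocycle equation ρ_{t+s} = ρ_t ∗ T_t ρ_s with t ↦ ρ_t continuous at 0, the triangular array (T_{jt/n} ρ_{t/n})_{0≤j≤n-1} is infinitesimal: for every ε > 0 and t > 0, lim_{n→∞} max_{0≤j≤n-1} (T_{jt/n} ρ_{t/n})({x : ‖x‖ ≥ ε}) = 0. -/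
/-!
Weak convergence `ρ_s ⇒ δ_0` and the portmanteau theorem make `ρ_s {‖x‖ ≥ δ}` small for small `s`,
for every fixed `δ > 0`. By Banach–Steinhaus the operators `T_r`, `0 ≤ r ≤ t`, are bounded by some
`M > 0`, so `‖T_r x‖ ≥ ε` forces `‖x‖ ≥ ε / M`: every entry of the `n`-th row of the array is
dominated by `ρ_{t/n} {‖x‖ ≥ ε / M}`, which tends to `0`.
-/

open MeasureTheory Filter Topology

theorem tendsto_measure_closed_of_tendsto_integral_dirac
    {Ω ι : Type*} [MeasurableSpace Ω] [TopologicalSpace Ω] [HasOuterApproxClosed Ω]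
    [OpensMeasurableSpace Ω] {L : Filter ι} (μ : ι → Measure Ω) [∀ i, IsProbabilityMeasure (μ i)]
    {x₀ : Ω} (h : ∀ f : BoundedContinuousFunction Ω ℝ,
      Tendsto (fun i => ∫ x, f x ∂(μ i)) L (𝓝 (f x₀)))
    {F : Set Ω} (hF : IsClosed F) (hx₀ : x₀ ∉ F) :
    Tendsto (fun i => μ i F) L (𝓝 0) := by
  let μs : ι → ProbabilityMeasure Ω := fun i => ⟨μ i, inferInstance⟩
  let μ₀ : ProbabilityMeasure Ω := ⟨Measure.dirac x₀, inferInstance⟩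
  have hlim : Tendsto μs L (𝓝 μ₀) :=
    ProbabilityMeasure.tendsto_iff_forall_integral_tendsto.mpr fun f => by
      simpa [μs, μ₀, integral_dirac' _ _ f.continuous.stronglyMeasurable] using h f
  have hlimsup := ProbabilityMeasure.limsup_measure_closed_le_of_tendsto hlim hF
  rw [ProbabilityMeasure.coe_mk, Measure.dirac_apply' x₀ hF.measurableSet,
    Set.indicator_of_notMem hx₀] at hlimsup
  exact tendsto_of_le_liminf_of_limsup_le zero_le hlimsup

theorem IsCompact.exists_bound_opNorm_of_continuousOn
    {𝕜 E F X : Type*} [NontriviallyNormedField 𝕜] [NormedAddCommGroup E] [NormedSpace 𝕜 E]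
    [CompleteSpace E] [NormedAddCommGroup F] [NormedSpace 𝕜 F] [TopologicalSpace X]
    {K : Set X} (hK : IsCompact K) {T : X → E →L[𝕜] F}
    (hT : ∀ x, ContinuousOn (fun r => T r x) K) :
    ∃ C, ∀ r ∈ K, ‖T r‖ ≤ C := by
  obtain ⟨C, hC⟩ := banach_steinhaus (g := fun r : K => T r) fun x => by
    obtain ⟨C, hC⟩ := hK.exists_bound_of_continuousOn (hT x)
    exact ⟨C, fun r => hC r r.2⟩
  exact ⟨C, fun r hr => hC ⟨r, hr⟩⟩

theorem ContinuousLinearMap.map_measure_norm_ge_le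
    {𝕜 E F : Type*} [NontriviallyNormedField 𝕜] [NormedAddCommGroup E] [NormedSpace 𝕜 E]
    [NormedAddCommGroup F] [NormedSpace 𝕜 F] [MeasurableSpace E] [OpensMeasurableSpace E]
    [MeasurableSpace F] [BorelSpace F] (μ : Measure E) {A : E →L[𝕜] F} {M : ℝ}
    (hA : ‖A‖ ≤ M) (hM : 0 < M) (ε : ℝ) :
    μ.map A {y | ε ≤ ‖y‖} ≤ μ {x | ε / M ≤ ‖x‖} := by
  rw [Measure.map_apply A.continuous.measurable
    (isClosed_le continuous_const continuous_norm).measurableSet]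
  refine measure_mono fun x (hx : ε ≤ ‖A x‖) => ?_
  rw [Set.mem_ofPred_eq, div_le_iff₀' hM]
  exact hx.trans (A.le_of_opNorm_le hA x)

theorem cocycle_array_infinitesimal_general
    {E : Type*} [NormedAddCommGroup E] [NormedSpace ℝ E] [CompleteSpace E]
    [MeasurableSpace E] [BorelSpace E]
    (T : ℝ → E →L[ℝ] E)
    (hTcont : ∀ x : E, ContinuousOn (fun t => T t x) (Set.Ici (0 : ℝ)))
    (ρ : ℝ → Measure E) (hρ : ∀ t, IsProbabilityMeasure (ρ t))
    (hcont : ∀ f : BoundedContinuousFunction E ℝ,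
      Filter.Tendsto (fun t => ∫ x, f x ∂(ρ t)) (nhdsWithin 0 (Set.Ici (0 : ℝ)))
        (nhds (f 0))) :
    ∀ ε : ℝ, 0 < ε → ∀ t : ℝ, 0 < t →
      Filter.Tendsto
        (fun n : ℕ =>
          (Finset.range n).sup
            (fun j => ((ρ (t / n)).map (T ((j : ℝ) * t / n))) {x : E | ε ≤ ‖x‖}))
        Filter.atTop (nhds 0) := by
  intro ε hε t ht
  obtain ⟨C, hC⟩ := (isCompact_Icc (a := 0) (b := t)).exists_bound_opNorm_of_continuousOn
    fun x => (hTcont x).mono Set.Icc_subset_Ici_self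
  have hM : 0 < max C 1 := lt_max_of_lt_right one_pos
  have hstep : Tendsto (fun n : ℕ => t / n) atTop (𝓝[Set.Ici 0] 0) :=
    tendsto_nhdsWithin_of_tendsto_nhds_of_eventually_within _
      (tendsto_const_div_atTop_nhds_zero_nat t) (.of_forall fun n => div_nonneg ht.le n.cast_nonneg)
  have hsmall := (tendsto_measure_closed_of_tendsto_integral_dirac ρ hcont
    (F := {x | ε / max C 1 ≤ ‖x‖}) (isClosed_le continuous_const continuous_norm) (by simpa using div_pos hε hM)).comp hstep
  refine tendsto_of_tendsto_of_tendsto_of_le_of_le tendsto_const_nhds hsmall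
    (fun _ => zero_le) fun n => Finset.sup_le fun j hj => ?_
  have hjn : (j : ℝ) < n := by exact_mod_cast Finset.mem_range.mp hj
  have hr : (j : ℝ) * t / n ∈ Set.Icc 0 t := by
    refine ⟨by positivity, div_le_of_le_mul₀ (by positivity) ht.le ?_⟩
    nlinarith
  exact ContinuousLinearMap.map_measure_norm_ge_le (ρ _) ((hC _ hr).trans (le_max_left _ _)) hM ε

/-- Infinitesimality of the triangular array `(T_{jt/n} ρ_{t/n})_{0 ≤ j ≤ n-1}` arising from the
cocycle equation: `max_{0≤j≤n-1} (T_{jt/n} ρ_{t/n})({‖x‖ ≥ ε}) → 0` as `n → ∞`. -/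
theorem cocycle_array_infinitesimal
    {E : Type*} [NormedAddCommGroup E] [NormedSpace ℝ E] [CompleteSpace E]
    [TopologicalSpace.SeparableSpace E] [MeasurableSpace E] [BorelSpace E]
    (T : ℝ → E →L[ℝ] E)
    (hT0 : T 0 = ContinuousLinearMap.id ℝ E)
    (hTsem : ∀ s t : ℝ, 0 ≤ s → 0 ≤ t → T (s + t) = (T s).comp (T t))
    (hTcont : ∀ x : E, ContinuousOn (fun t => T t x) (Set.Ici (0 : ℝ)))
    (ρ : ℝ → Measure E) (hρ : ∀ t, IsProbabilityMeasure (ρ t))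
    (hcoc : ∀ s t : ℝ, 0 ≤ s → 0 ≤ t →
      ρ (t + s) = (ρ t).conv ((ρ s).map (T t)))
    (hcont : ∀ f : BoundedContinuousFunction E ℝ,
      Filter.Tendsto (fun t => ∫ x, f x ∂(ρ t)) (nhdsWithin 0 (Set.Ici (0 : ℝ)))
        (nhds (f 0))) :
    ∀ ε : ℝ, 0 < ε → ∀ t : ℝ, 0 < t →
      Filter.Tendsto
        (fun n : ℕ =>
          (Finset.range n).sup
            (fun j => ((ρ (t / n)).map (T ((j : ℝ) * t / n))) {x : E | ε ≤ ‖x‖}))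
        Filter.atTop (nhds 0) :=
  cocycle_array_infinitesimal_general T hTcont ρ hρ hcont
end

section
/- For a C_0-semigroup (T_t) on a Banach space E and a Lévy process Y, the two processes V(t) := ∫_{(0,t]} T_{t−s} dY(s) and Z(t) := ∫_{(0,t]} T_s dY(s) have identical one-dimensional (marginal) distributions: V(t) =_d Z(t) for every fixed t ≥ 0. -/
open MeasureTheory Filter Topology

/-- Independent increments over all finite monotone families of times. -/
def HasIndepIncrements {Ω E : Type*} [MeasurableSpace Ω] [MeasurableSpace E]
    [NormedAddCommGroup E] (P : Measure Ω) (Z : ℝ → Ω → E) : Prop :=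
  ∀ (n : ℕ) (t : Fin (n + 1) → ℝ), Monotone t →
    ProbabilityTheory.iIndepFun
      (fun i : Fin n => fun ω => Z (t i.succ) ω - Z (t i.castSucc) ω) P

/-- Càdlàg paths: right continuous with left-hand limits. -/
def CadlagPaths {Ω E : Type*} [NormedAddCommGroup E] (Z : ℝ → Ω → E) : Prop :=
  ∀ ω : Ω, (∀ t : ℝ, ContinuousWithinAt (fun s => Z s ω) (Set.Ici t) t) ∧
    (∀ t : ℝ, 0 < t → ∃ l : E, Filter.Tendsto (fun s => Z s ω)
      (nhdsWithin t (Set.Iio t)) (nhds l))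

/-- An `E`-valued Lévy process: càdlàg, starting at `0`, with stationary independent
increments. -/
def IsLevyProcess {Ω E : Type*} [MeasurableSpace Ω] [MeasurableSpace E]
    [NormedAddCommGroup E] (P : Measure Ω) (Y : ℝ → Ω → E) : Prop :=
  (∀ t : ℝ, Measurable (Y t)) ∧
  (∀ᵐ ω ∂P, Y 0 ω = 0) ∧
  CadlagPaths Y ∧
  HasIndepIncrements P Y ∧
  (∀ s t : ℝ, 0 ≤ s → s ≤ t →
    P.map (fun ω => Y t ω - Y s ω) = P.map (Y (t - s)))

/-- `V = ∫_{(0,t]} g(s) dY(s)`, defined pathwise as the limit of Riemann-type sums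
`∑ g(t_j) (Y(t_j) − Y(t_{j−1}))` over the uniform partitions of `(0, t]`. -/
def IsRandomIntegralOn {Ω E : Type*} [NormedAddCommGroup E] [NormedSpace ℝ E]
    (g : ℝ → E →L[ℝ] E) (Y : ℝ → Ω → E) (t : ℝ) (V : Ω → E) : Prop :=
  ∀ ω : Ω, Filter.Tendsto
    (fun n : ℕ => ∑ j ∈ Finset.range n,
      g (((j : ℝ) + 1) * t / n) (Y (((j : ℝ) + 1) * t / n) ω - Y ((j : ℝ) * t / n) ω))
    Filter.atTop (nhds (V ω))

/-!
Applying `T (t / n)` to the `n`-th Riemann sum of `V t` turns its coefficients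
`T (t - (j + 1) t / n)` into `T (t - j t / n)`: these are the coefficients of the Riemann sum
of `Z t` read backwards in `j`. The increments of `Y` over the uniform partition are i.i.d., so
reversing their order does not change the law of the sum. Since `T (t / n) → id` strongly and
`‖T s‖` is bounded on `[0, t]` (Banach–Steinhaus), the modified sums still converge pointwise
to `V t`, and pointwise limits of equally distributed sequences are equally distributed.
-/

open ProbabilityTheory

namespace ProbabilityTheory

variable {ι Ω β : Type*} [Fintype ι] [MeasurableSpace Ω] [MeasurableSpace β]
  {P : Measure Ω} {X : ι → Ω → β}

theorem iIndepFun.map_fun_comp_perm_eq (hX : ∀ i, AEMeasurable (X i) P) (hind : iIndepFun X P)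
    (hident : ∀ i j, P.map (X i) = P.map (X j)) (e : Equiv.Perm ι) :
    P.map (fun ω i => X (e i) ω) = P.map (fun ω i => X i ω) := by
  rw [(hind.precomp e.injective).map_fun_eq_pi_map fun i => hX (e i),
    hind.map_fun_eq_pi_map hX]
  exact congrArg Measure.pi (funext fun i => hident (e i) i)

theorem iIndepFun.map_sum_comp_perm_eq {F : Type*} [AddCommMonoid F] [MeasurableSpace F]
    [MeasurableAdd₂ F] (hX : ∀ i, Measurable (X i)) (hind : iIndepFun X P)
    (hident : ∀ i j, P.map (X i) = P.map (X j)) (c : ι → β → F) (hc : ∀ i, Measurable (c i))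
    (e : Equiv.Perm ι) :
    P.map (fun ω => ∑ i, c (e i) (X i ω)) = P.map (fun ω => ∑ i, c i (X i ω)) := by
  set G : (ι → β) → F := fun x => ∑ i, c (e i) (x i)
  have hG : Measurable G :=
    Finset.measurable_sum _ fun i _ => (hc (e i)).comp (measurable_pi_apply i)
  have hreindex : (fun ω => ∑ i, c i (X i ω)) = G ∘ fun ω i => X (e i) ω :=
    funext fun ω => (Equiv.sum_comp e fun i => c i (X i ω)).symm
  rw [hreindex, ← Measure.map_map hG (measurable_pi_lambda _ fun i => hX (e i)),
    hind.map_fun_comp_perm_eq (fun i => (hX i).aemeasurable) hident,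
    Measure.map_map hG (measurable_pi_lambda _ hX)]
  rfl

end ProbabilityTheory

theorem MeasureTheory.map_eq_of_tendsto_of_map_eq {ι Ω E : Type*} [MeasurableSpace Ω]
    {P : Measure Ω} [IsProbabilityMeasure P] [TopologicalSpace E]
    [TopologicalSpace.PseudoMetrizableSpace E] [MeasurableSpace E] [BorelSpace E]
    {l : Filter ι} [l.NeBot] [l.IsCountablyGenerated] {X Y : ι → Ω → E} {X' Y' : Ω → E}
    (hX : ∀ i, AEMeasurable (X i) P) (hY : ∀ i, AEMeasurable (Y i) P)
    (hXlim : ∀ᵐ ω ∂P, Tendsto (fun i => X i ω) l (𝓝 (X' ω)))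
    (hYlim : ∀ᵐ ω ∂P, Tendsto (fun i => Y i ω) l (𝓝 (Y' ω)))
    (hXY : ∀ᶠ i in l, P.map (X i) = P.map (Y i)) :
    P.map X' = P.map Y' := by
  have hXd := tendstoInDistribution_of_ae_tendsto hX
    (aemeasurable_of_tendsto_metrizable_ae l hX hXlim) hXlim
  have hYd := tendstoInDistribution_of_ae_tendsto hY
    (aemeasurable_of_tendsto_metrizable_ae l hY hYlim) hYlim
  exact congrArg Subtype.val <| tendsto_nhds_unique_of_eventuallyEq (X := ProbabilityMeasure E)
    hXd.tendsto hYd.tendsto (hXY.mono fun i hi => Subtype.ext hi)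

section Operators

variable {𝕜 E F : Type*} [NontriviallyNormedField 𝕜] [NormedAddCommGroup E] [NormedSpace 𝕜 E]
  [NormedAddCommGroup F] [NormedSpace 𝕜 F]

theorem exists_forall_opNorm_le_of_continuousOn [CompleteSpace E] {X : Type*}
    [TopologicalSpace X] {T : X → E →L[𝕜] F} {K : Set X} (hK : IsCompact K)
    (hT : ∀ x, ContinuousOn (fun s => T s x) K) : ∃ M, ∀ s ∈ K, ‖T s‖ ≤ M := by
  obtain ⟨M, hM⟩ := banach_steinhaus (g := fun s : K => T s) fun x =>
    (hK.exists_bound_of_continuousOn (hT x)).imp fun C hC s => hC s s.2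
  exact ⟨M, fun s hs => hM ⟨s, hs⟩⟩

theorem tendsto_apply_of_tendsto_of_norm_le {ι : Type*} {l : Filter ι} {A : ι → E →L[𝕜] F}
    {M : ℝ} (hA : ∀ᶠ i in l, ‖A i‖ ≤ M) {u : ι → E} {v : E} {w : F}
    (hu : Tendsto u l (𝓝 v)) (hAv : Tendsto (fun i => A i v) l (𝓝 w)) :
    Tendsto (fun i => A i (u i)) l (𝓝 w) := by
  have hsmall : Tendsto (fun i => A i (u i - v)) l (𝓝 0) := by
    refine squeeze_zero_norm' (hA.mono fun i hi => (A i).le_of_opNorm_le hi _) ?_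
    simpa using (tendsto_iff_norm_sub_tendsto_zero.1 hu).const_mul M
  simpa using hsmall.add hAv

theorem tendsto_apply_div_natCast {T : ℝ → E →L[𝕜] F} (x : E)
    (hT : ContinuousWithinAt (fun s => T s x) (Set.Ici 0) 0) (t : ℝ) (ht : 0 ≤ t) :
    Tendsto (fun n : ℕ => T (t / n) x) atTop (𝓝 (T 0 x)) :=
  hT.tendsto.comp <| tendsto_nhdsWithin_of_tendsto_nhds_of_eventually_within _
    (tendsto_const_div_atTop_nhds_zero_nat t) (.of_forall fun n => Set.mem_Ici.2 (by positivity))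

end Operators

section RiemannSums

variable {Ω E : Type*} [NormedAddCommGroup E]

noncomputable def uniformIncrement (Y : ℝ → Ω → E) (t : ℝ) (n j : ℕ) (ω : Ω) : E :=
  Y ((j + 1) * t / n) ω - Y (j * t / n) ω

theorem measurable_uniformIncrement [MeasurableSpace Ω] [MeasurableSpace E] [BorelSpace E]
    [SecondCountableTopology E] {Y : ℝ → Ω → E} (hY : ∀ s, Measurable (Y s)) (t : ℝ) (n j : ℕ) :
    Measurable (uniformIncrement Y t n j) :=
  (hY _).sub (hY _)

theorem HasIndepIncrements.iIndepFun_uniformIncrement [MeasurableSpace Ω] [MeasurableSpace E]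
    {P : Measure Ω} {Y : ℝ → Ω → E} (hY : HasIndepIncrements P Y) {t : ℝ} (ht : 0 ≤ t) (n : ℕ) :
    iIndepFun (fun i : Fin n => uniformIncrement Y t n i) P := by
  have hmono : Monotone fun i : Fin (n + 1) => ((i : ℕ) : ℝ) * t / n := fun i j hij => by
    dsimp only
    gcongr
    exact_mod_cast hij
  convert hY n _ hmono using 3 with i ω
  simp [uniformIncrement]

theorem map_uniformIncrement [MeasurableSpace Ω] [MeasurableSpace E] {P : Measure Ω}
    {Y : ℝ → Ω → E}
    (hstat : ∀ s t : ℝ, 0 ≤ s → s ≤ t → P.map (fun ω => Y t ω - Y s ω) = P.map (Y (t - s)))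
    {t : ℝ} (ht : 0 ≤ t) (n j : ℕ) :
    P.map (uniformIncrement Y t n j) = P.map (Y (t / n)) := by
  have hle : (j : ℝ) * t / n ≤ (j + 1) * t / n := by gcongr; linarith
  rw [← show (j + 1 : ℝ) * t / n - j * t / n = t / n by ring]
  exact hstat _ _ (by positivity) hle

variable [NormedSpace ℝ E]

noncomputable def riemannSum (g : ℝ → E →L[ℝ] E) (Y : ℝ → Ω → E) (t : ℝ) (n : ℕ) (ω : Ω) : E :=
  ∑ j ∈ Finset.range n, g ((j + 1) * t / n) (uniformIncrement Y t n j ω)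

theorem riemannSum_eq_sum_fin (g : ℝ → E →L[ℝ] E) (Y : ℝ → Ω → E) (t : ℝ) (n : ℕ) (ω : Ω) :
    riemannSum g Y t n ω = ∑ i : Fin n, g ((i + 1) * t / n) (uniformIncrement Y t n i ω) :=
  (Fin.sum_univ_eq_sum_range (fun j => g ((j + 1) * t / n) (uniformIncrement Y t n j ω)) n).symm

theorem measurable_riemannSum [MeasurableSpace Ω] [MeasurableSpace E] [BorelSpace E]
    [SecondCountableTopology E] {Y : ℝ → Ω → E} (hY : ∀ s, Measurable (Y s))
    (g : ℝ → E →L[ℝ] E) (t : ℝ) (n : ℕ) :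
    Measurable (riemannSum g Y t n) :=
  Finset.measurable_sum _ fun _ _ => (g _).measurable.comp (measurable_uniformIncrement hY t n _)

end RiemannSums

section Semigroup

variable {Ω E : Type*} [NormedAddCommGroup E] [NormedSpace ℝ E] {T : ℝ → E →L[ℝ] E}

theorem semigroup_apply_riemannSum_eq_sum_rev
    (hTsem : ∀ s t : ℝ, 0 ≤ s → 0 ≤ t → T (s + t) = (T s).comp (T t)) {t : ℝ} (ht : 0 ≤ t)
    (Y : ℝ → Ω → E) (n : ℕ) (ω : Ω) :
    T (t / n) (riemannSum (fun s => T (t - s)) Y t n ω) =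
      ∑ i : Fin n, T (((Fin.revPerm i : ℕ) + 1) * t / n) (uniformIncrement Y t n i ω) := by
  rw [riemannSum_eq_sum_fin, map_sum]
  refine Fintype.sum_congr _ _ fun i => ?_
  have hn : (0 : ℝ) < n := by exact_mod_cast i.pos
  have hi : ((i : ℕ) : ℝ) + 1 ≤ n := by exact_mod_cast i.isLt
  have hrest : 0 ≤ t - ((i : ℕ) + 1) * t / n := by
    rw [sub_nonneg, div_le_iff₀ hn]
    nlinarith
  rw [← ContinuousLinearMap.comp_apply, ← hTsem _ _ (by positivity) hrest, Fin.revPerm_apply,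
    Fin.val_rev, Nat.cast_sub i.isLt]
  congr 2
  push_cast
  field_simp
  ring

theorem map_semigroup_apply_riemannSum_eq [MeasurableSpace Ω] [MeasurableSpace E] [BorelSpace E]
    [SecondCountableTopology E] {P : Measure Ω}
    (hTsem : ∀ s t : ℝ, 0 ≤ s → 0 ≤ t → T (s + t) = (T s).comp (T t))
    {Y : ℝ → Ω → E} (hYmeas : ∀ s, Measurable (Y s)) (hInd : HasIndepIncrements P Y)
    (hstat : ∀ s t : ℝ, 0 ≤ s → s ≤ t → P.map (fun ω => Y t ω - Y s ω) = P.map (Y (t - s)))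
    {t : ℝ} (ht : 0 ≤ t) (n : ℕ) :
    P.map (fun ω => T (t / n) (riemannSum (fun s => T (t - s)) Y t n ω)) =
      P.map (riemannSum T Y t n) := by
  rw [funext (semigroup_apply_riemannSum_eq_sum_rev hTsem ht Y n),
    funext (riemannSum_eq_sum_fin T Y t n)]
  exact (hInd.iIndepFun_uniformIncrement ht n).map_sum_comp_perm_eq
    (fun i : Fin n => measurable_uniformIncrement hYmeas t n i)
    (fun i j => by rw [map_uniformIncrement hstat ht, map_uniformIncrement hstat ht])
    (fun j : Fin n => ⇑(T ((j + 1) * t / n))) (fun j => (T _).measurable) Fin.revPerm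

end Semigroup

theorem randomIntegral_marginals_eq_general
    {E : Type*} [NormedAddCommGroup E] [NormedSpace ℝ E] [CompleteSpace E]
    [TopologicalSpace.SeparableSpace E] [MeasurableSpace E] [BorelSpace E]
    {Ω : Type*} [MeasurableSpace Ω] (P : Measure Ω) [IsProbabilityMeasure P]
    (T : ℝ → E →L[ℝ] E)
    (hT0 : T 0 = ContinuousLinearMap.id ℝ E)
    (hTsem : ∀ s t : ℝ, 0 ≤ s → 0 ≤ t → T (s + t) = (T s).comp (T t))
    (hTcont : ∀ x : E, ContinuousOn (fun t => T t x) (Set.Ici (0 : ℝ)))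
    (Y : ℝ → Ω → E) (hY : IsLevyProcess P Y)
    (V Z : ℝ → Ω → E)
    (hV : ∀ t : ℝ, 0 ≤ t → IsRandomIntegralOn (fun s => T (t - s)) Y t (V t))
    (hZ : ∀ t : ℝ, 0 ≤ t → IsRandomIntegralOn (fun s => T s) Y t (Z t)) :
    ∀ t : ℝ, 0 ≤ t → P.map (V t) = P.map (Z t) := by
  have : SecondCountableTopology E := UniformSpace.secondCountable_of_separable E
  obtain ⟨hYmeas, -, -, hInd, hstat⟩ := hY
  intro t ht
  obtain ⟨M, hM⟩ := exists_forall_opNorm_le_of_continuousOn (isCompact_Icc (a := 0) (b := t))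
    fun x => (hTcont x).mono Set.Icc_subset_Ici_self
  have hTn : ∀ᶠ n : ℕ in atTop, ‖T (t / n)‖ ≤ M := (eventually_ge_atTop 1).mono fun n hn =>
    hM _ ⟨by positivity, div_le_self ht (by exact_mod_cast hn)⟩
  refine map_eq_of_tendsto_of_map_eq (l := (atTop : Filter ℕ))
    (X := fun n ω => T (t / n) (riemannSum (fun s => T (t - s)) Y t n ω))
    (Y := riemannSum T Y t)
    (fun n => ((T _).measurable.comp (measurable_riemannSum hYmeas _ t n)).aemeasurable)
    (fun n => (measurable_riemannSum hYmeas T t n).aemeasurable)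
    (.of_forall fun ω => tendsto_apply_of_tendsto_of_norm_le hTn (hV t ht ω) ?_)
    (.of_forall (hZ t ht))
    (.of_forall (map_semigroup_apply_riemannSum_eq hTsem hYmeas hInd hstat ht))
  simpa [hT0] using tendsto_apply_div_natCast (V t ω) (hTcont _ 0 Set.self_mem_Ici) t ht

/-- The processes `V(t) = ∫_{(0,t]} T_{t−s} dY(s)` and `Z(t) = ∫_{(0,t]} T_s dY(s)` built from
a `C₀`-semigroup `T` and a Lévy process `Y` have identical one-dimensional marginal
distributions. -/
theorem randomIntegral_marginals_eq
    {E : Type*} [NormedAddCommGroup E] [NormedSpace ℝ E] [CompleteSpace E]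
    [TopologicalSpace.SeparableSpace E] [MeasurableSpace E] [BorelSpace E]
    {Ω : Type*} [MeasurableSpace Ω] (P : Measure Ω) [IsProbabilityMeasure P]
    (T : ℝ → E →L[ℝ] E)
    (hT0 : T 0 = ContinuousLinearMap.id ℝ E)
    (hTsem : ∀ s t : ℝ, 0 ≤ s → 0 ≤ t → T (s + t) = (T s).comp (T t))
    (hTcont : ∀ x : E, ContinuousOn (fun t => T t x) (Set.Ici (0 : ℝ)))
    (Y : ℝ → Ω → E) (hY : IsLevyProcess P Y)
    (V Z : ℝ → Ω → E) (hVmeas : ∀ t, Measurable (V t)) (hZmeas : ∀ t, Measurable (Z t))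
    (hV : ∀ t : ℝ, 0 ≤ t → IsRandomIntegralOn (fun s => T (t - s)) Y t (V t))
    (hZ : ∀ t : ℝ, 0 ≤ t → IsRandomIntegralOn (fun s => T s) Y t (Z t)) :
    ∀ t : ℝ, 0 ≤ t → P.map (V t) = P.map (Z t) :=
  randomIntegral_marginals_eq_general P T hT0 hTsem hTcont Y hY V Z hV hZ
end
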